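/- If {k_n} is a sequence with n_0 - k_n = o(n / l^{√(log n)}) for all l > 1, then in the equicorrelated Gaussian model with ρ ∈ (0,1), the k_n-FWER of the procedure with cutoff c_n(α,ρ) = √(1-ρ)a_n - √ρΦ⁻¹(α) converges to 0 as n → ∞. -/

import Mathlib

open Filter MeasureTheory ProbabilityTheory

noncomputable def Phi (x : ℝ) : ℝ :=
  ∫ t in Set.Iic x, Real.exp (-t ^ 2 / 2) / Real.sqrt (2 * Real.pi)

noncomputable def PhiInv (p : ℝ) : ℝ := Function.invFun Phi p

noncomputable def cutoff (n : ℕ) (α ρ : ℝ) : ℝ :=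
  Real.sqrt (1 - ρ) * PhiInv (1 - 1 / n) - Real.sqrt ρ * PhiInv α

open Real Set
open scoped ENNReal NNReal

noncomputable def gpdf (t : ℝ) : ℝ := Real.exp (-t ^ 2 / 2) / Real.sqrt (2 * Real.pi)

lemma gpdf_eq : gpdf = gaussianPDFReal 0 1 := by
  ext t
  simp [gpdf, gaussianPDFReal, div_eq_inv_mul]

lemma gpdf_pos (t : ℝ) : 0 < gpdf t := by
  rw [gpdf_eq]; exact gaussianPDFReal_pos 0 1 t one_ne_zero

lemma integrable_gpdf : Integrable gpdf := by
  rw [gpdf_eq]; exact integrable_gaussianPDFReal 0 1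

lemma integral_gpdf : ∫ t, gpdf t = 1 := by
  rw [gpdf_eq]; exact integral_gaussianPDFReal_eq_one 0 one_ne_zero

lemma Phi_def' (x : ℝ) : Phi x = ∫ t in Set.Iic x, gpdf t := rfl

lemma gpdf_anti {x y : ℝ} (hx : 0 ≤ x) (hxy : x ≤ y) : gpdf y ≤ gpdf x := by
  unfold gpdf
  have h2 : (0:ℝ) ≤ Real.sqrt (2 * Real.pi) := Real.sqrt_nonneg _
  apply div_le_div_of_nonneg_right _ h2
  apply Real.exp_le_exp.2
  have : x^2 ≤ y^2 := by nlinarith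
  linarith


lemma Phi_sub {x y : ℝ} (hxy : x ≤ y) : Phi y - Phi x = ∫ t in Set.Ioc x y, gpdf t := by
  rw [Phi_def', Phi_def', ← Iic_union_Ioc_eq_Iic hxy,
    setIntegral_union (Iic_disjoint_Ioc le_rfl) measurableSet_Ioc
      integrable_gpdf.integrableOn integrable_gpdf.integrableOn]
  ring

lemma Phi_mono : Monotone Phi := by
  intro x y hxy
  have := Phi_sub hxy
  have h2 : 0 ≤ ∫ t in Set.Ioc x y, gpdf t :=
    setIntegral_nonneg measurableSet_Ioc (fun t _ => (gpdf_pos t).le)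
  linarith

lemma Phi_tail (x : ℝ) : 1 - Phi x = ∫ t in Set.Ioi x, gpdf t := by
  have h : (∫ t in Set.Iic x ∪ Set.Ioi x, gpdf t)
      = (∫ t in Set.Iic x, gpdf t) + ∫ t in Set.Ioi x, gpdf t :=
    setIntegral_union (Iic_disjoint_Ioi le_rfl) measurableSet_Ioi
      integrable_gpdf.integrableOn integrable_gpdf.integrableOn
  rw [Set.Iic_union_Ioi] at h
  rw [setIntegral_univ, integral_gpdf] at h
  rw [Phi_def']
  linarith

lemma Phi_lt_one (x : ℝ) : Phi x < 1 := by
  have h := Phi_tail x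
  have h2 : 0 < ∫ t in Set.Ioi x, gpdf t := by
    apply setIntegral_pos_iff_support_of_nonneg_ae ?_ ?_ |>.2
    · simp only [Function.support, ne_eq]
      have : {t | gpdf t ≠ 0} = Set.univ := by
        ext t; simp [(gpdf_pos t).ne']
      rw [this]
      simp [Set.inter_univ]
    · exact ae_of_all _ (fun t => (gpdf_pos t).le)
    · exact integrable_gpdf.integrableOn
  linarith

lemma Phi_pos (x : ℝ) : 0 < Phi x := by
  rw [Phi_def']
  apply setIntegral_pos_iff_support_of_nonneg_ae ?_ ?_ |>.2
  · have : (Function.support gpdf) = Set.univ := by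
      ext t; simp [Function.support, (gpdf_pos t).ne']
    rw [this]
    simpa using measure_Iic_lt_top (μ := (volume : Measure ℝ))
  · exact ae_of_all _ (fun t => (gpdf_pos t).le)
  · exact integrable_gpdf.integrableOn

lemma integrable_mul_gauss : Integrable (fun t : ℝ => t * Real.exp (-t ^ 2 / 2)) := by
  have h := integrable_mul_exp_neg_mul_sq (b := 1/2) (by norm_num)
  convert h using 2 with t
  ring_nf

lemma integral_Ioi_mul_gauss (x : ℝ) :
    ∫ t in Set.Ioi x, t * Real.exp (-t ^ 2 / 2) = Real.exp (-x ^ 2 / 2) := by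
  have h := integral_Ioi_of_hasDerivAt_of_tendsto (f := fun t : ℝ => -Real.exp (-t ^ 2 / 2))
    (f' := fun t : ℝ => t * Real.exp (-t ^ 2 / 2)) (a := x) (m := 0)
    ?_ ?_ ?_ ?_
  · rw [h]; ring
  · exact (Continuous.continuousWithinAt (by continuity))
  · intro t ht
    have h0 := (hasDerivAt_pow 2 t).neg.div_const 2
    have hd : HasDerivAt (fun t : ℝ => -t ^ 2 / 2) (-t) t := by
      refine h0.congr_deriv ?_; push_cast; ring
    have h2 := (hd.exp).neg
    refine h2.congr_deriv ?_
    ring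
  · exact integrable_mul_gauss.integrableOn
  · have h3 : Tendsto (fun t : ℝ => -(t ^ 2 / 2)) atTop atBot :=
      tendsto_neg_atTop_atBot.comp
        (Tendsto.atTop_div_const (by norm_num) (tendsto_pow_atTop two_ne_zero))
    have h4 : Tendsto (fun t : ℝ => Real.exp (-t ^ 2 / 2)) atTop (nhds 0) := by
      simp only [neg_div]
      exact Real.tendsto_exp_atBot.comp h3
    have h5 := h4.neg
    rw [neg_zero] at h5
    exact h5

lemma Phi_tail_le {x : ℝ} (hx : 1 ≤ x) : 1 - Phi x ≤ Real.exp (-x ^ 2 / 2) := by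
  rw [Phi_tail]
  have h1 : ∫ t in Set.Ioi x, gpdf t ≤ ∫ t in Set.Ioi x, t * Real.exp (-t ^ 2 / 2) := by
    apply setIntegral_mono_on integrable_gpdf.integrableOn
      integrable_mul_gauss.integrableOn measurableSet_Ioi
    intro t ht
    have ht1 : 1 ≤ t := hx.trans (le_of_lt ht)
    unfold gpdf
    rw [div_le_iff₀ (by positivity)]
    have h2 : (1:ℝ) ≤ Real.sqrt (2 * Real.pi) := by
      rw [show (1:ℝ) = Real.sqrt 1 by simp]
      exact Real.sqrt_le_sqrt (by nlinarith [Real.pi_gt_three])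
    have he : (0:ℝ) ≤ Real.exp (-t ^ 2 / 2) := (Real.exp_pos _).le
    calc Real.exp (-t ^ 2 / 2) = 1 * Real.exp (-t ^ 2 / 2) * 1 := by ring
      _ ≤ t * Real.exp (-t ^ 2 / 2) * Real.sqrt (2 * Real.pi) :=
        mul_le_mul (mul_le_mul_of_nonneg_right ht1 he) h2 one_pos.le (by positivity)
  rw [integral_Ioi_mul_gauss] at h1
  exact h1

lemma Phi_tail_ge {x : ℝ} (hx : 1 ≤ x) :
    Real.exp (-x ^ 2 / 2) ≤ Real.exp (3/2) * Real.sqrt (2 * Real.pi) * x * (1 - Phi x) := by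
  have hx0 : 0 < x := lt_of_lt_of_le one_pos hx
  have hstep : Phi (x + 1/x) - Phi x = ∫ t in Set.Ioc x (x + 1/x), gpdf t :=
    Phi_sub (le_add_of_nonneg_right (by positivity))
  have hconst : gpdf (x + 1/x) * (volume (Set.Ioc x (x + 1/x))).toReal
      ≤ ∫ t in Set.Ioc x (x + 1/x), gpdf t := by
    apply setIntegral_ge_of_const_le_real measurableSet_Ioc (by simp)
    · intro t ht
      exact gpdf_anti (le_trans hx0.le ht.1.le) ht.2
    · exact integrable_gpdf.integrableOn
  rw [Real.volume_Ioc, show x + 1/x - x = 1/x by ring,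
    ENNReal.toReal_ofReal (by positivity)] at hconst
  have hgl : gpdf x * Real.exp (-(3:ℝ)/2) ≤ gpdf (x + 1/x) := by
    unfold gpdf
    rw [div_mul_eq_mul_div, div_le_div_iff₀ (by positivity) (by positivity)]
    rw [← Real.exp_add]
    have h1 : -x^2/2 + (-(3:ℝ)/2) ≤ -(x + 1/x)^2/2 := by
      have h2 : (1:ℝ)/x ≤ 1 := by
        rw [div_le_one hx0]; exact hx
      have h3 : (x + 1/x)^2 = x^2 + 2 + (1/x)^2 := by
        field_simp; ring
      nlinarith [sq_nonneg (1/x)]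
    nlinarith [Real.exp_le_exp.2 h1, Real.exp_pos (-x^2/2 + (-(3:ℝ)/2)),
      Real.sqrt_nonneg (2*Real.pi), Real.exp_pos (-(x + 1/x)^2/2)]
  have hone : Phi (x + 1/x) - Phi x ≤ 1 - Phi x := by
    have := Phi_lt_one (x + 1/x); linarith
  -- combine
  have key : gpdf x * Real.exp (-(3:ℝ)/2) * (1/x) ≤ 1 - Phi x := by
    calc gpdf x * Real.exp (-(3:ℝ)/2) * (1/x) ≤ gpdf (x + 1/x) * (1/x) := by
          apply mul_le_mul_of_nonneg_right hgl (by positivity)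
      _ ≤ ∫ t in Set.Ioc x (x + 1/x), gpdf t := hconst
      _ = Phi (x + 1/x) - Phi x := hstep.symm
      _ ≤ 1 - Phi x := hone
  unfold gpdf at key
  have keq : Real.exp (-x ^ 2 / 2) / Real.sqrt (2 * Real.pi) * Real.exp (-(3:ℝ)/2) * (1/x)
      = Real.exp (-x ^ 2 / 2) * Real.exp (-(3:ℝ)/2) / (Real.sqrt (2 * Real.pi) * x) := by
    ring
  rw [keq, div_le_iff₀ (by positivity)] at key
  calc Real.exp (-x ^ 2 / 2)
      = Real.exp ((3:ℝ)/2) * (Real.exp (-x ^ 2 / 2) * Real.exp (-(3:ℝ)/2)) := by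
        rw [← Real.exp_add, ← Real.exp_add]; congr 1; ring
    _ ≤ Real.exp ((3:ℝ)/2) * ((1 - Phi x) * (Real.sqrt (2 * Real.pi) * x)) :=
        mul_le_mul_of_nonneg_left key (Real.exp_pos _).le
    _ = Real.exp (3/2) * Real.sqrt (2 * Real.pi) * x * (1 - Phi x) := by ring

lemma Phi_neg (x : ℝ) : Phi (-x) = 1 - Phi x := by
  rw [Phi_tail x, Phi_def']
  have h : ∫ t in Set.Ioi x, gpdf (-t) = ∫ t in Set.Iic (-x), gpdf t :=
    integral_comp_neg_Ioi x gpdf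
  have h2 : ∀ t : ℝ, gpdf (-t) = gpdf t := by
    intro t; unfold gpdf; norm_num
  simp only [h2] at h
  exact h.symm

lemma Phi_lipschitz {x y : ℝ} (hxy : x ≤ y) : Phi y - Phi x ≤ y - x := by
  rw [Phi_sub hxy]
  have h : ∫ t in Set.Ioc x y, gpdf t ≤ ∫ t in Set.Ioc x y, (1:ℝ) := by
    apply setIntegral_mono_on integrable_gpdf.integrableOn
      (integrableOn_const (by simp)) measurableSet_Ioc
    intro t _
    unfold gpdf
    rw [div_le_one (by positivity)]
    calc Real.exp (-t ^ 2 / 2) ≤ Real.exp 0 := Real.exp_le_exp.2 (by nlinarith [sq_nonneg t])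
      _ = 1 := Real.exp_zero
      _ ≤ Real.sqrt (2 * Real.pi) := by
        rw [show (1:ℝ) = Real.sqrt 1 by simp]
        exact Real.sqrt_le_sqrt (by nlinarith [Real.pi_gt_three])
  calc ∫ t in Set.Ioc x y, gpdf t ≤ ∫ t in Set.Ioc x y, (1:ℝ) := h
    _ = y - x := by
      simp [Real.volume_Ioc, ENNReal.toReal_ofReal (by linarith : (0:ℝ) ≤ y - x), hxy]

lemma Phi_continuous : Continuous Phi := by
  rw [Metric.continuous_iff]
  intro x ε hε
  refine ⟨ε, hε, fun y hy => ?_⟩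
  rw [Real.dist_eq] at *
  rw [abs_lt] at hy ⊢
  rcases le_total x y with h | h
  · have h1 := Phi_lipschitz h
    have h2 := Phi_mono h
    constructor <;> linarith
  · have h1 := Phi_lipschitz h
    have h2 := Phi_mono h
    constructor <;> linarith

lemma Phi_big {p : ℝ} (hp0 : 0 < p) (hp1 : p < 1) : ∃ b : ℝ, 1 ≤ b ∧ p < Phi b := by
  set b := max 1 (1 - 2 * Real.log (1 - p)) with hb
  refine ⟨b, le_max_left _ _, ?_⟩
  have hb1 : (1:ℝ) ≤ b := le_max_left _ _
  have hb2 : 1 - 2 * Real.log (1 - p) ≤ b := le_max_right _ _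
  have hsq : b ≤ b ^ 2 := by nlinarith
  have hlt : Real.exp (-b ^ 2 / 2) < 1 - p := by
    have h1 : -b ^ 2 / 2 < Real.log (1 - p) := by nlinarith
    calc Real.exp (-b ^ 2 / 2) < Real.exp (Real.log (1 - p)) := Real.exp_lt_exp.2 h1
      _ = 1 - p := Real.exp_log (by linarith)
  have := Phi_tail_le hb1
  linarith

lemma Phi_surj {p : ℝ} (hp : p ∈ Set.Ioo (0:ℝ) 1) : ∃ x, Phi x = p := by
  obtain ⟨hp0, hp1⟩ := hp
  obtain ⟨b, hb1, hbp⟩ := Phi_big hp0 hp1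
  obtain ⟨b', hb'1, hb'p⟩ := Phi_big (by linarith : (0:ℝ) < 1 - p) (by linarith)
  set c := max b b' with hc
  have h1 : p < Phi c := lt_of_lt_of_le hbp (Phi_mono (le_max_left _ _))
  have h2 : Phi (-c) < p := by
    have : 1 - p < Phi c := lt_of_lt_of_le hb'p (Phi_mono (le_max_right _ _))
    rw [Phi_neg]; linarith
  have hmem : p ∈ Set.Icc (Phi (-c)) (Phi c) := ⟨h2.le, h1.le⟩
  have hcc : -c ≤ c := by
    have : (1:ℝ) ≤ c := le_trans hb1 (le_max_left _ _)
    linarith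
  obtain ⟨x, _, hx⟩ := intermediate_value_Icc hcc Phi_continuous.continuousOn hmem
  exact ⟨x, hx⟩

lemma Phi_PhiInv {p : ℝ} (hp : p ∈ Set.Ioo (0:ℝ) 1) : Phi (PhiInv p) = p :=
  Function.invFun_eq (Phi_surj hp)

lemma law_Iic {Ω : Type*} [MeasureSpace Ω] (X : Ω → ℝ) (hm : Measurable X)
    (hl : Measure.map X (ℙ : Measure Ω) = gaussianReal 0 1) (x : ℝ) :
    (ℙ : Measure Ω) {ω | X ω ≤ x} = ENNReal.ofReal (Phi x) := by
  have h : {ω | X ω ≤ x} = X ⁻¹' (Set.Iic x) := rfl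
  rw [h, ← Measure.map_apply hm measurableSet_Iic, hl,
    gaussianReal_apply_eq_integral 0 one_ne_zero, ← gpdf_eq]
  rfl

lemma law_Ioi {Ω : Type*} [MeasureSpace Ω] (X : Ω → ℝ) (hm : Measurable X)
    (hl : Measure.map X (ℙ : Measure Ω) = gaussianReal 0 1) (x : ℝ) :
    (ℙ : Measure Ω) {ω | x < X ω} = ENNReal.ofReal (1 - Phi x) := by
  have h : {ω | x < X ω} = X ⁻¹' (Set.Ioi x) := rfl
  rw [h, ← Measure.map_apply hm measurableSet_Ioi, hl,
    gaussianReal_apply_eq_integral 0 one_ne_zero, ← gpdf_eq, Phi_tail]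

lemma ev_sqrt_log_ge (c a : ℝ) (ha : 0 < a) :
    ∀ᶠ n : ℕ in atTop, c ≤ Real.sqrt (a * Real.log n) := by
  have hlog : Tendsto (fun n : ℕ => Real.log n) atTop atTop :=
    Real.tendsto_log_atTop.comp tendsto_natCast_atTop_atTop
  filter_upwards [hlog.eventually_ge_atTop (c ^ 2 / a), hlog.eventually_ge_atTop 0] with n h1 h2
  have h3 : c ^ 2 ≤ a * Real.log n := by
    rw [div_le_iff₀ ha] at h1; linarith
  calc c ≤ |c| := le_abs_self c
    _ = Real.sqrt (c ^ 2) := (Real.sqrt_sq_eq_abs c).symm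
    _ ≤ Real.sqrt (a * Real.log n) := Real.sqrt_le_sqrt h3

lemma aux_lim {l : ℝ} (hl : 1 < l) :
    Tendsto (fun n : ℕ => l ^ Real.sqrt (Real.log n) / n) atTop (nhds 0) := by
  have hl0 : (0:ℝ) < l := lt_trans one_pos hl
  have hlog : Tendsto (fun n : ℕ => Real.log n) atTop atTop :=
    Real.tendsto_log_atTop.comp tendsto_natCast_atTop_atTop
  apply squeeze_zero' (g := fun n : ℕ => Real.exp (-(Real.log n) / 2))
  · filter_upwards [eventually_ge_atTop 1] with n hn
    positivity
  · have hev : ∀ᶠ n : ℕ in atTop, 2 * Real.log l ≤ Real.sqrt (Real.log n) := by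
      have := ev_sqrt_log_ge (2 * Real.log l) 1 one_pos
      simpa using this
    filter_upwards [hev, eventually_ge_atTop 1, hlog.eventually_ge_atTop 0] with n hn hn1 hln
    have hn0 : (0:ℝ) < n := by exact_mod_cast hn1
    set u := Real.log (n : ℝ) with hu
    have hnn : Real.exp u = n := Real.exp_log hn0
    have h1 : l ^ Real.sqrt u = Real.exp (Real.log l * Real.sqrt u) :=
      Real.rpow_def_of_pos hl0 _
    have hsq : Real.sqrt u * Real.sqrt u = u := Real.mul_self_sqrt hln
    have h2 : Real.log l * Real.sqrt u ≤ u / 2 := by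
      nlinarith [Real.sqrt_nonneg u, Real.log_pos hl]
    rw [← hnn, h1, ← Real.exp_sub]
    apply Real.exp_le_exp.2
    linarith
  · apply Real.tendsto_exp_atBot.comp
    rw [show (fun n : ℕ => -(Real.log n) / 2) = (fun u : ℝ => -u / 2) ∘ (fun n : ℕ => Real.log n) from rfl]
    apply Tendsto.comp ?_ hlog
    apply Tendsto.atBot_div_const (by norm_num : (0:ℝ) < 2)
    exact tendsto_neg_atBot_iff.2 tendsto_id

lemma exists_big {c : ℝ} (hc : 0 < c) : ∃ M : ℝ, 1 ≤ M ∧ Real.exp (-M ^ 2 / 2) < c := by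
  set M := max 1 (1 - 2 * Real.log c) with hM
  refine ⟨M, le_max_left _ _, ?_⟩
  have hb1 : (1:ℝ) ≤ M := le_max_left _ _
  have hb2 : 1 - 2 * Real.log c ≤ M := le_max_right _ _
  have hsq : M ≤ M ^ 2 := by nlinarith
  have h1 : -M ^ 2 / 2 < Real.log c := by nlinarith
  calc Real.exp (-M ^ 2 / 2) < Real.exp (Real.log c) := Real.exp_lt_exp.2 h1
    _ = c := Real.exp_log hc

lemma Phi_aN : ∀ᶠ n : ℕ in atTop, Phi (PhiInv (1 - 1/(n:ℝ))) = 1 - 1/(n:ℝ) := by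
  filter_upwards [eventually_ge_atTop 2] with n hn
  have hn2 : (2:ℝ) ≤ n := by exact_mod_cast hn
  apply Phi_PhiInv
  constructor
  · have h1 : 1/(n:ℝ) ≤ 1/2 := by
      apply div_le_div_of_nonneg_left one_pos.le (by norm_num) hn2
    linarith
  · have h2 : 0 < 1/(n:ℝ) := by positivity
    linarith

lemma aN_gt (c : ℝ) : ∀ᶠ n : ℕ in atTop, c < PhiInv (1 - 1/(n:ℝ)) := by
  have h1 : Phi c < 1 := Phi_lt_one c
  have h2 : Tendsto (fun n : ℕ => 1/(n:ℝ)) atTop (nhds 0) := tendsto_one_div_atTop_nhds_zero_nat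
  filter_upwards [Phi_aN, h2.eventually_lt_const (by linarith : (0:ℝ) < 1 - Phi c)]
    with n hPhi hsm
  by_contra hc
  push_neg at hc
  have h3 : Phi (PhiInv (1 - 1/(n:ℝ))) ≤ Phi c := Phi_mono hc
  rw [hPhi] at h3
  linarith

lemma aN_bounds : ∀ᶠ n : ℕ in atTop,
    PhiInv (1 - 1/(n:ℝ)) ≤ Real.sqrt (2 * Real.log n) ∧
    Real.exp (-(PhiInv (1 - 1/(n:ℝ)))^2/2)
      ≤ (Real.exp (3/2) * Real.sqrt (2*Real.pi)) * PhiInv (1 - 1/(n:ℝ)) / n := by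
  filter_upwards [Phi_aN, aN_gt 1, eventually_ge_atTop 1] with n hPhi h1 hn1
  set a := PhiInv (1 - 1/(n:ℝ)) with ha
  have hn0 : (0:ℝ) < n := by exact_mod_cast hn1
  have htail : 1 - Phi a = 1/(n:ℝ) := by rw [hPhi]; ring
  have hub := Phi_tail_le h1.le
  have hlb := Phi_tail_ge h1.le
  constructor
  · have h2 : (1:ℝ)/n ≤ Real.exp (-a^2/2) := by rw [← htail]; exact hub
    have h3 : Real.log (1/(n:ℝ)) ≤ -a^2/2 := by
      calc Real.log (1/(n:ℝ)) ≤ Real.log (Real.exp (-a^2/2)) :=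
            Real.log_le_log (by positivity) h2
        _ = -a^2/2 := Real.log_exp _
    rw [one_div, Real.log_inv] at h3
    have ha2 : a^2 ≤ 2 * Real.log n := by linarith
    calc a ≤ |a| := le_abs_self a
      _ = Real.sqrt (a^2) := (Real.sqrt_sq_eq_abs a).symm
      _ ≤ Real.sqrt (2 * Real.log n) := Real.sqrt_le_sqrt ha2
  · rw [htail] at hlb
    have heq : Real.exp (3/2) * Real.sqrt (2*Real.pi) * a * (1/(n:ℝ))
        = (Real.exp (3/2) * Real.sqrt (2*Real.pi)) * a / n := by ring
    linarith

set_option maxHeartbeats 1000000 in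
theorem stmt19 {Ω : Type*} [MeasureSpace Ω] [IsProbabilityMeasure (ℙ : Measure Ω)]
    (α ρ : ℝ) (hα : α ∈ Set.Ioo (0 : ℝ) 1) (hρ : ρ ∈ Set.Ioo (0 : ℝ) 1)
    -- V 0 plays the role of the shared factor Z; V (i+1) are the idiosyncratic terms Z_i
    (V : ℕ → Ω → ℝ) (hmeas : ∀ i, Measurable (V i))
    (hindep : iIndepFun V (ℙ : Measure Ω))
    (hlaw : ∀ i, Measure.map (V i) (ℙ : Measure Ω) = gaussianReal 0 1)
    (n₀ : ℕ → ℕ) (hle : ∀ n, n₀ n ≤ n)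
    (k : ℕ → ℕ) (hk : ∀ n, 1 ≤ k n ∧ k n ≤ n₀ n)
    (hsmall : ∀ l : ℝ, 1 < l →
      Tendsto (fun n : ℕ => ((n₀ n - k n : ℕ) : ℝ) * l ^ Real.sqrt (Real.log n) / n)
        atTop (nhds 0)) :
    Tendsto (fun n : ℕ =>
        ((ℙ : Measure Ω) {ω | k n ≤ ((Finset.Icc 1 (n₀ n)).filter (fun i =>
            cutoff n α ρ < -Real.sqrt ρ * V 0 ω + Real.sqrt (1 - ρ) * V i ω)).card}).toReal)
      atTop (nhds 0) := by
  obtain ⟨hρ0, hρ1⟩ := hρ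
  have h1ρ : (0:ℝ) < Real.sqrt (1 - ρ) := Real.sqrt_pos.2 (by linarith)
  have hsρ : (0:ℝ) ≤ Real.sqrt ρ := Real.sqrt_nonneg ρ
  set q := PhiInv α with hq
  set C := Real.exp (3/2) * Real.sqrt (2*Real.pi) with hCdef
  have hC : 0 < C := by positivity
  rw [NormedAddCommGroup.tendsto_nhds_zero]
  intro ε hε
  obtain ⟨M₀, hM₀1, hM₀⟩ := exists_big (by linarith : (0:ℝ) < ε/2)
  set M := max M₀ (-q) with hM
  have hM1 : (1:ℝ) ≤ M := le_trans hM₀1 (le_max_left _ _)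
  have hMq : -q ≤ M := le_max_right _ _
  have hMe : Real.exp (-M^2/2) < ε/2 := by
    have h0 : M₀ ≤ M := le_max_left _ _
    have h0' : M₀^2 ≤ M^2 := by nlinarith
    calc Real.exp (-M^2/2) ≤ Real.exp (-M₀^2/2) := Real.exp_le_exp.2 (by linarith)
      _ < ε/2 := hM₀
  set r := Real.sqrt ρ / Real.sqrt (1-ρ) * (q + M) with hr
  have hr0 : 0 ≤ r := by
    apply mul_nonneg (div_nonneg hsρ h1ρ.le); linarith
  set l := Real.exp (Real.sqrt 2 * r + Real.sqrt 2) with hldef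
  have hl1 : 1 < l := by
    rw [hldef]
    have h2 : (0:ℝ) < Real.sqrt 2 := by positivity
    calc (1:ℝ) = Real.exp 0 := Real.exp_zero.symm
      _ < Real.exp (Real.sqrt 2 * r + Real.sqrt 2) := Real.exp_lt_exp.2 (by nlinarith)
  have hT : Tendsto (fun n : ℕ =>
      (((n₀ n - k n : ℕ):ℝ) + 1) * l ^ Real.sqrt (Real.log n) / n) atTop (nhds 0) := by
    have h1 := hsmall l hl1
    have h2 := aux_lim hl1
    have h3 := h1.add h2
    rw [add_zero] at h3
    exact h3.congr (fun n => by ring)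
  filter_upwards [Phi_aN, aN_gt (r+1), aN_bounds, ev_sqrt_log_ge (4*C) 2 two_pos,
    hT.eventually_lt_const (by linarith : (0:ℝ) < ε/2),
    eventually_ge_atTop 1] with n hPhiA haR hbounds hb4C hTn hn1
  set a := PhiInv (1 - 1/(n:ℝ)) with ha
  set d := n₀ n - k n with hd
  set τ := a - r with hτ
  set b := Real.sqrt (2 * Real.log n) with hb
  obtain ⟨hk1, hk2⟩ := hk n
  have hd1 : d + 1 ≤ n₀ n := by omega
  have hn0 : (0:ℝ) < n := by exact_mod_cast hn1
  have hcut : cutoff n α ρ = Real.sqrt (1-ρ) * a - Real.sqrt ρ * q := rfl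
  -- inclusion
  have hsub : {ω | k n ≤ ((Finset.Icc 1 (n₀ n)).filter (fun i =>
          cutoff n α ρ < -Real.sqrt ρ * V 0 ω + Real.sqrt (1 - ρ) * V i ω)).card}
      ⊆ {ω | V 0 ω ≤ -M} ∪ ⋃ i ∈ Finset.Icc 1 (d+1), {ω | τ < V i ω} := by
    intro ω hω
    simp only [Set.mem_setOf_eq] at hω
    by_cases hV0 : V 0 ω ≤ -M
    · exact Set.mem_union_left _ hV0
    · push_neg at hV0
      apply Set.mem_union_right
      by_contra hcon
      have hall : ∀ i ∈ Finset.Icc 1 (d+1),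
          ¬ (cutoff n α ρ < -Real.sqrt ρ * V 0 ω + Real.sqrt (1-ρ) * V i ω) := by
        intro i hi hPi
        apply hcon
        have h2 : Real.sqrt ρ * (-M) ≤ Real.sqrt ρ * V 0 ω :=
          mul_le_mul_of_nonneg_left hV0.le hsρ
        have hτeq : Real.sqrt (1-ρ) * τ = Real.sqrt (1-ρ)*a - Real.sqrt ρ*(q+M) := by
          rw [hτ, hr]
          field_simp
        have h3 : Real.sqrt (1-ρ) * τ < Real.sqrt (1-ρ) * V i ω := by
          rw [hcut] at hPi
          nlinarith
        have h4 : τ < V i ω := lt_of_mul_lt_mul_left h3 h1ρ.le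
        exact Set.mem_biUnion hi h4
      have hsubF : (Finset.Icc 1 (n₀ n)).filter (fun i =>
            cutoff n α ρ < -Real.sqrt ρ * V 0 ω + Real.sqrt (1 - ρ) * V i ω)
          ⊆ Finset.Icc 1 (n₀ n) \ Finset.Icc 1 (d+1) := by
        intro j hj
        rw [Finset.mem_filter] at hj
        rw [Finset.mem_sdiff]
        exact ⟨hj.1, fun hjd => hall j hjd hj.2⟩
      have hcard := Finset.card_le_card hsubF
      rw [Finset.card_sdiff_of_subset (Finset.Icc_subset_Icc_right hd1)] at hcard
      rw [Nat.card_Icc, Nat.card_Icc] at hcard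
      omega
  -- measure bound
  have hmeasb : (ℙ : Measure Ω) {ω | k n ≤ ((Finset.Icc 1 (n₀ n)).filter (fun i =>
          cutoff n α ρ < -Real.sqrt ρ * V 0 ω + Real.sqrt (1 - ρ) * V i ω)).card}
      ≤ ENNReal.ofReal (Phi (-M)) + ((d+1 : ℕ) : ℝ≥0∞) * ENNReal.ofReal (1 - Phi τ) := by
    refine le_trans (measure_mono hsub) (le_trans (measure_union_le _ _) (add_le_add ?_ ?_))
    · exact le_of_eq (law_Iic (V 0) (hmeas 0) (hlaw 0) (-M))
    · calc (ℙ : Measure Ω) (⋃ i ∈ Finset.Icc 1 (d+1), {ω | τ < V i ω})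
          ≤ ∑ i ∈ Finset.Icc 1 (d+1), (ℙ : Measure Ω) {ω | τ < V i ω} :=
            measure_biUnion_finset_le _ _
        _ = ((d+1 : ℕ) : ℝ≥0∞) * ENNReal.ofReal (1 - Phi τ) := by
            rw [Finset.sum_congr rfl (fun i _ => law_Ioi (V i) (hmeas i) (hlaw i) τ)]
            rw [Finset.sum_const, Nat.card_Icc, nsmul_eq_mul]
            norm_num
  have hPhiMpos : (0:ℝ) ≤ Phi (-M) := (Phi_pos _).le
  have hPhiτnn : (0:ℝ) ≤ 1 - Phi τ := by linarith [Phi_lt_one τ]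
  have htoReal : ((ℙ : Measure Ω) {ω | k n ≤ ((Finset.Icc 1 (n₀ n)).filter (fun i =>
          cutoff n α ρ < -Real.sqrt ρ * V 0 ω + Real.sqrt (1 - ρ) * V i ω)).card}).toReal
      ≤ Phi (-M) + ((d:ℝ)+1) * (1 - Phi τ) := by
    have hfin : ENNReal.ofReal (Phi (-M)) + ((d+1 : ℕ) : ℝ≥0∞) * ENNReal.ofReal (1 - Phi τ) ≠ ⊤ := by
      apply ENNReal.add_ne_top.2
      constructor
      · exact ENNReal.ofReal_ne_top
      · exact ENNReal.mul_ne_top (ENNReal.natCast_ne_top _) ENNReal.ofReal_ne_top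
    have h5 := ENNReal.toReal_mono hfin hmeasb
    rw [ENNReal.toReal_add ENNReal.ofReal_ne_top
      (ENNReal.mul_ne_top (ENNReal.natCast_ne_top _) ENNReal.ofReal_ne_top),
      ENNReal.toReal_mul, ENNReal.toReal_ofReal hPhiMpos, ENNReal.toReal_ofReal hPhiτnn,
      ENNReal.toReal_natCast] at h5
    have hc : ((d+1:ℕ):ℝ) = (d:ℝ)+1 := by push_cast; ring
    rw [hc] at h5
    exact h5
  -- real estimates
  have hτ1 : 1 ≤ τ := by rw [hτ]; linarith
  have ha1 : 1 ≤ a := by linarith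
  have hab : a ≤ b := hbounds.1
  have hb0 : 0 ≤ b := Real.sqrt_nonneg _
  have hstepA : 1 - Phi τ ≤ Real.exp (-τ^2/2) := Phi_tail_le hτ1
  have hstepB : Real.exp (-τ^2/2) ≤ Real.exp (-a^2/2) * Real.exp (r*a) := by
    rw [← Real.exp_add]
    apply Real.exp_le_exp.2
    rw [hτ]
    have hexp : -(a-r)^2/2 = -a^2/2 + r*a - r^2/2 := by ring
    have := sq_nonneg r
    linarith
  have hstepC : Real.exp (-a^2/2) ≤ C * a / n := hbounds.2
  have hCb : C * b ≤ Real.exp b := by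
    have h5 := Real.add_one_le_exp (b/2)
    have h6 : Real.exp b = Real.exp (b/2) * Real.exp (b/2) := by
      rw [← Real.exp_add]; ring_nf
    have h7 : (b/2+1) * (b/2+1) ≤ Real.exp (b/2) * Real.exp (b/2) :=
      mul_le_mul h5 h5 (by linarith) (Real.exp_pos _).le
    have h8 : C * b ≤ (b/4) * b := mul_le_mul_of_nonneg_right (by linarith) hb0
    have h9 : (b/4) * b = b*b/4 := by ring
    have h10 : (b/2+1) * (b/2+1) = b*b/4 + b + 1 := by ring
    linarith
  have hbrw : Real.exp b * Real.exp (r*b) = l ^ Real.sqrt (Real.log n) := by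
    rw [hldef, Real.rpow_def_of_pos (Real.exp_pos _), Real.log_exp, ← Real.exp_add]
    congr 1
    have hbb : b = Real.sqrt 2 * Real.sqrt (Real.log n) := by
      rw [hb, Real.sqrt_mul (by norm_num : (0:ℝ) ≤ 2)]
    rw [hbb]; ring
  have hchain : 1 - Phi τ ≤ l ^ Real.sqrt (Real.log n) / n := by
    have h8 : Real.exp (r*a) ≤ Real.exp (r*b) :=
      Real.exp_le_exp.2 (mul_le_mul_of_nonneg_left hab hr0)
    have h9 : C * a / n ≤ C * b / n := by
      apply div_le_div_of_nonneg_right ?_ hn0.le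
      exact mul_le_mul_of_nonneg_left hab hC.le
    calc 1 - Phi τ ≤ Real.exp (-a^2/2) * Real.exp (r*a) := le_trans hstepA hstepB
      _ ≤ (C * a / n) * Real.exp (r*a) := by
          apply mul_le_mul_of_nonneg_right hstepC (Real.exp_pos _).le
      _ ≤ (C * b / n) * Real.exp (r*b) := by
          apply mul_le_mul h9 h8 (Real.exp_pos _).le (by positivity)
      _ ≤ (Real.exp b / n) * Real.exp (r*b) := by
          apply mul_le_mul_of_nonneg_right ?_ (Real.exp_pos _).le
          apply div_le_div_of_nonneg_right hCb hn0.le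
      _ = (Real.exp b * Real.exp (r*b)) / n := by ring
      _ = l ^ Real.sqrt (Real.log n) / n := by rw [hbrw]
  -- final
  have hfinal : Phi (-M) + ((d:ℝ)+1) * (1 - Phi τ) < ε := by
    have hPhiM : Phi (-M) < ε/2 := by
      rw [Phi_neg]
      have := Phi_tail_le hM1
      linarith
    have hd0 : (0:ℝ) ≤ (d:ℝ) + 1 := by positivity
    have h10 : ((d:ℝ)+1) * (1 - Phi τ) ≤ ((d:ℝ)+1) * (l ^ Real.sqrt (Real.log n) / n) :=
      mul_le_mul_of_nonneg_left hchain hd0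
    have h11 : ((d:ℝ)+1) * (l ^ Real.sqrt (Real.log n) / n)
        = ((d:ℝ)+1) * l ^ Real.sqrt (Real.log n) / n := by ring
    rw [h11] at h10
    have h12 := hTn
    simp only [hd] at h10 ⊢
    linarith
  rw [Real.norm_eq_abs, abs_of_nonneg ENNReal.toReal_nonneg]
  exact lt_of_le_of_lt htoReal hfinal
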